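/- arXiv:2605.26882 — 6 statements merged into one kernel-verified Lean document; each statement's English description precedes it below -/
import Mathlib

section
/- Let n ≥ 1. For a Boolean pattern b : Fin n → Bool with b(0) = false, define prev_b : Fin n → Fin n by prev_b(i) = the largest index j ≤ i with b(j) = false. Then for every function f : Fin n → Fin n there exist permutations σ and τ of Fin n and a pattern b : Fin n → Bool with b(0) = false such that f(i) = τ(prev_b(σ(i))) for all i ∈ Fin n. -/
/-- `prevB hn b h0 i` is the largest index `j ≤ i` with `b j = false`
(well-defined since `b 0 = false`). -/
noncomputable def prevB {n : ℕ} (hn : 0 < n) (b : Fin n → Bool)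
    (h0 : b ⟨0, hn⟩ = false) (i : Fin n) : Fin n :=
  (Finset.univ.filter fun j => j ≤ i ∧ b j = false).max'
    ⟨⟨0, hn⟩, Finset.mem_filter.mpr
      ⟨Finset.mem_univ _, Fin.mk_le_of_le_val (Nat.zero_le _), h0⟩⟩

/-- Three-phase structure of the Oblivious Extended Permutation / OFA protocol:
any selection map `f : Fin n → Fin n` factors as a permutation `σ`
(dummy-value placement phase), followed by the copy-from-the-preceding-real-position
map `prevB` for some pattern `b` with `b 0 = false` (replication phase),
followed by a permutation `τ` (permutation phase). -/
theorem oep_three_phase_factorization (n : ℕ) (hn : 0 < n) (f : Fin n → Fin n) :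
    ∃ (σ τ : Equiv.Perm (Fin n)) (b : Fin n → Bool) (h0 : b ⟨0, hn⟩ = false),
      ∀ i : Fin n, f i = τ (prevB hn b h0 (σ i)) := by
  classical
  set g : Fin n → Fin n := f ∘ Tuple.sort f with hg
  have hmono : Monotone g := Tuple.monotone_sort f
  -- `b i = true` iff some earlier index has the same `g`-value
  set b : Fin n → Bool := fun i => decide (∃ j, j < i ∧ g j = g i) with hb
  have h0 : b ⟨0, hn⟩ = false := by
    simp only [hb, decide_eq_false_iff_not, not_exists, not_and]
    intro j hj
    exact absurd hj (by simp [Fin.lt_def])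
  -- `m i` = least index with the same `g`-value as `i`
  set m : Fin n → Fin n := fun i =>
    (Finset.univ.filter fun j => g j = g i).min' ⟨i, by simp⟩ with hm
  have hmem : ∀ i, m i ∈ Finset.univ.filter fun j => g j = g i :=
    fun i => Finset.min'_mem _ _
  have hgm : ∀ i, g (m i) = g i := fun i => (Finset.mem_filter.mp (hmem i)).2
  have hml : ∀ i, m i ≤ i := fun i => Finset.min'_le _ _ (by simp)
  have hmin : ∀ i j, g j = g i → m i ≤ j := fun i j hj =>
    Finset.min'_le _ _ (by simp [hj])
  have hbm : ∀ i, b (m i) = false := by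
    intro i
    simp only [hb, decide_eq_false_iff_not, not_exists, not_and]
    intro j hj hgj
    exact absurd (hmin i j (by rw [hgj, hgm])) (not_le.mpr hj)
  have hSm : ∀ j, b j = false → m j = j := by
    intro j hj
    rcases lt_or_eq_of_le (hml j) with h | h
    · exfalso
      rw [hb, decide_eq_false_iff_not] at hj
      exact hj ⟨m j, h, hgm j⟩
    · exact h
  -- prevB computes m
  have hprev : ∀ i, prevB hn b h0 i = m i := by
    intro i
    apply le_antisymm
    · apply Finset.max'_le
      intro j hjmem
      obtain ⟨-, hji, hbj⟩ := Finset.mem_filter.mp hjmem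
      by_contra hlt
      push_neg at hlt
      have hgj : g j = g i :=
        le_antisymm (hmono hji) (by rw [← hgm i]; exact hmono hlt.le)
      rw [hb, decide_eq_false_iff_not] at hbj
      exact hbj ⟨m i, hlt, by rw [hgm, hgj]⟩
    · exact Finset.le_max' _ _ (Finset.mem_filter.mpr ⟨Finset.mem_univ _, hml i, hbm i⟩)
  -- g is injective on block starts
  have hinj : Set.InjOn g {j | b j = false} := by
    intro j hj j' hj' hgeq
    have h1 : m j = m j' := by
      simp only [hm]
      congr 1
      ext k
      simp [hgeq]
    rw [← hSm j hj, ← hSm j' hj', h1]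
  -- extend g restricted to block starts to a permutation τ
  set e : {x // x ∈ {j | b j = false}} ≃ {x // x ∈ g '' {j | b j = false}} :=
    Equiv.Set.imageOfInjOn g {j | b j = false} hinj with he
  refine ⟨(Tuple.sort f)⁻¹, e.extendSubtype, b, h0, fun i => ?_⟩
  have hτ : ∀ j, b j = false → e.extendSubtype j = g j := by
    intro j hj
    rw [Equiv.extendSubtype_apply_of_mem e j hj]
    rfl
  rw [hprev, hτ _ (hbm _), hgm]
  show f i = g ((Tuple.sort f)⁻¹ i)
  simp [hg]
end

section
/- Let n ≥ 1, let α be any type, let b : Fin n → Bool with b(0) = false, and let x : Fin n → α. Define out : Fin n → α recursively by out(0) = x(0) and, for i+1 < n, out(i+1) = out(i) if b(i+1) = true, and out(i+1) = x(i+1) if b(i+1) = false. Then for every i ∈ Fin n, out(i) = x(prev_b(i)), where prev_b(i) is the largest index j ≤ i with b(j) = false. -/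
lemma prevB_self {n : ℕ} (hn : 0 < n) (b : Fin n → Bool)
    (h0 : b ⟨0, hn⟩ = false) (i : Fin n) (hi : b i = false) :
    prevB hn b h0 i = i := by
  apply le_antisymm
  · exact Finset.max'_le _ _ _ fun y hy => (Finset.mem_filter.mp hy).2.1
  · exact Finset.le_max' _ _ (Finset.mem_filter.mpr ⟨Finset.mem_univ _, le_refl _, hi⟩)

lemma prevB_succ_true {n : ℕ} (hn : 0 < n) (b : Fin n → Bool)
    (h0 : b ⟨0, hn⟩ = false) (i : ℕ) (h : i + 1 < n)
    (hb : b ⟨i + 1, h⟩ = true) :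
    prevB hn b h0 ⟨i + 1, h⟩ = prevB hn b h0 ⟨i, Nat.lt_of_succ_lt h⟩ := by
  unfold prevB
  congr 1
  apply Finset.filter_congr
  intro j _
  simp only [and_congr_left_iff]
  intro hj
  constructor
  · intro hle
    rcases lt_or_eq_of_le hle with hlt | heq
    · simp only [Fin.lt_def] at hlt; simp only [Fin.le_def]; omega
    · exact absurd (heq ▸ hb) (by simp [hj])
  · intro hle
    exact le_trans hle (by simp [Fin.le_def])

/-- Correctness of the replication phase of the OFA protocol, realized as a
cascade of replication 1-switches: if `out 0 = x 0` and
`out (i+1) = if b (i+1) then out i else x (i+1)`, then `out i = x (prevB i)`,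
where `prevB i` is the largest index `j ≤ i` with `b j = false`. -/
theorem replication_phase_correct {α : Type*} (n : ℕ) (hn : 0 < n)
    (b : Fin n → Bool) (h0 : b ⟨0, hn⟩ = false) (x out : Fin n → α)
    (hout0 : out ⟨0, hn⟩ = x ⟨0, hn⟩)
    (houts : ∀ (i : ℕ) (h : i + 1 < n),
      out ⟨i + 1, h⟩ =
        if b ⟨i + 1, h⟩ then out ⟨i, Nat.lt_of_succ_lt h⟩ else x ⟨i + 1, h⟩) :
    ∀ i : Fin n, out i = x (prevB hn b h0 i) := by
  rintro ⟨k, hk⟩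
  induction k with
  | zero => rw [hout0, prevB_self hn b h0 _ h0]
  | succ m ih =>
    rw [houts m hk]
    by_cases hb : b ⟨m + 1, hk⟩ = true
    · rw [if_pos hb, prevB_succ_true hn b h0 m hk hb, ih (Nat.lt_of_succ_lt hk)]
    · simp only [Bool.not_eq_true] at hb
      rw [if_neg (by simp [hb]), prevB_self hn b h0 _ hb]
end

section
/- Let U and V be linearly ordered types, let σ : U → V be injective, and let A and B be nonempty finite subsets of U. Then the minimum of σ over A equals the minimum of σ over B if and only if the (unique) element of A ∪ B at which σ attains its minimum over A ∪ B lies in A ∩ B. -/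
/-- Deterministic core of MinHash: for an injective `σ : U → V` between linear
orders and nonempty finite sets `A, B ⊆ U`, the minimum of `σ` over `A` equals
the minimum of `σ` over `B` iff the (unique, by injectivity) element of `A ∪ B`
at which `σ` attains its minimum over `A ∪ B` lies in `A ∩ B`. -/
theorem minhash_equal_iff_argmin_in_inter {U V : Type*} [LinearOrder U] [LinearOrder V]
    (σ : U → V) (hσ : Function.Injective σ)
    (A B : Finset U) (hA : A.Nonempty) (hB : B.Nonempty) :
    A.inf' hA σ = B.inf' hB σ ↔
      ∃ u ∈ A ∪ B,
        σ u = (A ∪ B).inf' (hA.mono Finset.subset_union_left) σ ∧ u ∈ A ∩ B := by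
  have hU : (A ∪ B).inf' (hA.mono Finset.subset_union_left) σ
      = min (A.inf' hA σ) (B.inf' hB σ) := by
    rw [Finset.inf'_union hA hB]
  constructor
  · intro h
    obtain ⟨a, ha, hsa⟩ := A.exists_mem_eq_inf' hA σ
    obtain ⟨b, hb, hsb⟩ := B.exists_mem_eq_inf' hB σ
    have hab : a = b := hσ (by rw [← hsa, ← hsb, h])
    refine ⟨a, Finset.mem_union_left _ ha, ?_, Finset.mem_inter.2 ⟨ha, hab ▸ hb⟩⟩
    rw [hU, ← h, min_self, hsa]
  · rintro ⟨u, -, hsu, hu⟩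
    obtain ⟨huA, huB⟩ := Finset.mem_inter.1 hu
    have h1 : A.inf' hA σ ≤ σ u := Finset.inf'_le _ huA
    have h2 : B.inf' hB σ ≤ σ u := Finset.inf'_le _ huB
    rw [hU] at hsu
    have ea : A.inf' hA σ = σ u := le_antisymm h1 (hsu ▸ min_le_left _ _)
    have eb : B.inf' hB σ = σ u := le_antisymm h2 (hsu ▸ min_le_right _ _)
    rw [ea, eb]
end

section
/- Let U be a nonempty finite linearly ordered type, let S be a nonempty finite subset of U, and let σ be a permutation of U chosen uniformly at random. Then for every s₀ ∈ S, the probability that σ attains its minimum over S at s₀ (i.e., σ(s₀) = min over s ∈ S of σ(s)) equals 1 / |S|. -/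
section aux
variable {U : Type*} [DecidableEq U]

lemma swap_image_self {S : Finset U} {a b : U} (ha : a ∈ S) (hb : b ∈ S) :
    S.image (Equiv.swap a b) = S := by
  ext x
  simp only [Finset.mem_image]
  constructor
  · rintro ⟨y, hy, rfl⟩
    rcases eq_or_ne y a with rfl | hya
    · simpa [Equiv.swap_apply_left] using hb
    rcases eq_or_ne y b with rfl | hyb
    · simpa [Equiv.swap_apply_right] using ha
    · simpa [Equiv.swap_apply_of_ne_of_ne hya hyb] using hy
  · intro hx
    exact ⟨Equiv.swap a b x, by
      rcases eq_or_ne x a with rfl | hxa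
      · simpa [Equiv.swap_apply_left] using hb
      rcases eq_or_ne x b with rfl | hxb
      · simpa [Equiv.swap_apply_right] using ha
      · simpa [Equiv.swap_apply_of_ne_of_ne hxa hxb] using hx, by simp⟩

lemma inf'_comp_perm {α : Type*} [LinearOrder α] {S : Finset U} (hS : S.Nonempty)
    (e : Equiv.Perm U) (h : S.image e = S) (f : U → α) :
    S.inf' hS (f ∘ e) = S.inf' hS f := by
  apply le_antisymm
  · obtain ⟨b, hb, heq⟩ := Finset.exists_mem_eq_inf' hS f
    rw [heq]
    rw [← h, Finset.mem_image] at hb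
    obtain ⟨a, ha, rfl⟩ := hb
    exact Finset.inf'_le _ ha
  · obtain ⟨a, ha, heq⟩ := Finset.exists_mem_eq_inf' hS (f ∘ e)
    rw [heq]
    have : e a ∈ S := by rw [← h]; exact Finset.mem_image_of_mem _ ha
    exact Finset.inf'_le _ this

end aux

/-- Argmin-uniformity of a uniformly random permutation (key ingredient of
MinHash): for a nonempty finite linearly ordered `U`, a nonempty `S : Finset U`
and any `s₀ ∈ S`, the probability that a uniformly random permutation `σ` of
`U` attains its minimum over `S` at `s₀` is `1 / |S|`. -/
theorem random_perm_argmin_uniform (U : Type*) [Fintype U] [Nonempty U] [LinearOrder U]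
    (S : Finset U) (hS : S.Nonempty) (s₀ : U) (hs₀ : s₀ ∈ S) :
    (PMF.uniformOfFintype (Equiv.Perm U)).toOuterMeasure
        {σ : Equiv.Perm U | σ s₀ = S.inf' hS ⇑σ} = 1 / (S.card : ENNReal) := by
  classical
  set E : U → Finset (Equiv.Perm U) :=
    fun s => Finset.univ.filter (fun σ : Equiv.Perm U => σ s = S.inf' hS σ) with hE
  have hcardeq : ∀ s ∈ S, (E s).card = (E s₀).card := by
    intro s hs
    apply Finset.card_bij (fun σ _ => (Equiv.swap s₀ s).trans σ)
    · intro σ hσ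
      simp only [hE, Finset.mem_filter, Finset.mem_univ, true_and] at hσ ⊢
      have himg : S.inf' hS (⇑σ ∘ ⇑(Equiv.swap s₀ s)) = S.inf' hS ⇑σ :=
        inf'_comp_perm hS _ (swap_image_self hs₀ hs) ⇑σ
      have : ⇑((Equiv.swap s₀ s).trans σ) = ⇑σ ∘ ⇑(Equiv.swap s₀ s) := rfl
      rw [this, himg]
      simpa [Equiv.swap_apply_right] using hσ
    · intro a _ b _ h
      ext x
      have := congrArg (fun e : Equiv.Perm U => e (Equiv.swap s₀ s x)) h
      simpa [Equiv.swap_apply_self] using this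
    · intro σ hσ
      refine ⟨(Equiv.swap s₀ s).trans σ, ?_, ?_⟩
      · simp only [hE, Finset.mem_filter, Finset.mem_univ, true_and] at hσ ⊢
        have himg : S.inf' hS (⇑σ ∘ ⇑(Equiv.swap s₀ s)) = S.inf' hS ⇑σ :=
          inf'_comp_perm hS _ (swap_image_self hs₀ hs) ⇑σ
        have : ⇑((Equiv.swap s₀ s).trans σ) = ⇑σ ∘ ⇑(Equiv.swap s₀ s) := rfl
        rw [this, himg]
        simpa [Equiv.swap_apply_left] using hσ
      · ext x; simp [Equiv.swap_apply_self]
  have hargmin : ∀ σ : Equiv.Perm U, ∃ s ∈ S, σ s = S.inf' hS σ := by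
    intro σ
    obtain ⟨b, hb, h⟩ := Finset.exists_mem_eq_inf' hS ⇑σ
    exact ⟨b, hb, h.symm⟩
  choose f hfS hf using hargmin
  have hsum : (Finset.univ : Finset (Equiv.Perm U)).card = ∑ s ∈ S, (E s).card := by
    rw [Finset.card_eq_sum_card_fiberwise (f := f) (fun σ _ => hfS σ)]
    refine Finset.sum_congr rfl fun s hs => ?_
    congr 1
    ext σ
    simp only [hE, Finset.mem_filter, Finset.mem_univ, true_and]
    constructor
    · rintro rfl; exact hf σ
    · intro h
      exact σ.injective (by rw [hf σ, h])
  have hkey : Fintype.card (Equiv.Perm U) = S.card * (E s₀).card := by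
    rw [← Finset.card_univ, hsum, Finset.sum_congr rfl hcardeq, Finset.sum_const, smul_eq_mul]
  rw [PMF.toOuterMeasure_apply]
  have hind : ∀ σ : Equiv.Perm U,
      Set.indicator {σ : Equiv.Perm U | σ s₀ = S.inf' hS ⇑σ}
        (⇑(PMF.uniformOfFintype (Equiv.Perm U))) σ
      = if σ ∈ E s₀ then ((Fintype.card (Equiv.Perm U) : ENNReal))⁻¹ else 0 := by
    intro σ
    simp [Set.indicator_apply, hE, PMF.uniformOfFintype_apply, Set.mem_setOf_eq]
  rw [tsum_fintype]
  simp_rw [hind]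
  rw [Finset.sum_ite_mem, Finset.univ_inter, Finset.sum_const, nsmul_eq_mul]
  have hEne : ((E s₀).card : ENNReal) ≠ 0 := by
    have h0 : (E s₀).card ≠ 0 := by
      intro h
      rw [h, mul_zero] at hkey
      exact absurd hkey (Fintype.card_pos (α := Equiv.Perm U)).ne'
    exact_mod_cast h0
  have hEtop : ((E s₀).card : ENNReal) ≠ ⊤ := ENNReal.natCast_ne_top _
  have hScne : ((S.card : ENNReal)) ≠ 0 := by exact_mod_cast hS.card_pos.ne'
  have hkey' : ((Fintype.card (Equiv.Perm U) : ENNReal))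
      = (S.card : ENNReal) * ((E s₀).card : ENNReal) := by exact_mod_cast hkey
  rw [hkey', ENNReal.mul_inv (Or.inr hEtop) (Or.inr hEne), one_div, ← mul_assoc,
    mul_comm ((E s₀).card : ENNReal), mul_assoc, ENNReal.mul_inv_cancel hEne hEtop, mul_one]
end

section
/- Let U be a nonempty finite linearly ordered type and let A and B be nonempty finite subsets of U. If σ is a permutation of U chosen uniformly at random, then the probability that min over a ∈ A of σ(a) equals min over b ∈ B of σ(b) is exactly |A ∩ B| / |A ∪ B|, the Jaccard coefficient of A and B. -/
/-!
If `m` is the element of `A ∪ B` on which `σ` is smallest, the two minima agree exactly when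
`m ∈ A ∩ B`. Right multiplication by the transposition `(x y)`, for `x, y ∈ A ∪ B`, is a
bijection between the permutations whose minimiser is `x` and those whose minimiser is `y`, so
the minimiser of a uniformly random permutation is uniform on `A ∪ B`.
-/

open Finset

namespace Equiv.Perm

variable {U : Type*} [LinearOrder U] (σ : Perm U) {s t : Finset U} (hs : s.Nonempty) {x y : U}

def argminOn : U := σ.symm (s.inf' hs σ)

theorem apply_argminOn : σ (σ.argminOn hs) = s.inf' hs σ :=
  σ.apply_symm_apply _

theorem argminOn_mem : σ.argminOn hs ∈ s := by
  obtain ⟨a, ha, h⟩ := s.exists_mem_eq_inf' hs σ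
  rwa [argminOn, h, symm_apply_apply]

theorem argminOn_eq_iff (hx : x ∈ s) : σ.argminOn hs = x ↔ ∀ y ∈ s, σ x ≤ σ y := by
  rw [← le_inf'_iff hs, ← apply_argminOn]
  refine ⟨fun h => h ▸ le_rfl, fun h => σ.injective (le_antisymm ?_ h)⟩
  rw [apply_argminOn]
  exact inf'_le _ hx

theorem inf'_eq_inf'_iff_argminOn_mem (ht : t ⊆ s) (ht' : t.Nonempty) :
    t.inf' ht' σ = s.inf' hs σ ↔ σ.argminOn hs ∈ t := by
  refine ⟨fun h => ?_, fun h => le_antisymm ?_ (inf'_mono σ ht ht')⟩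
  · obtain ⟨a, ha, hta⟩ := t.exists_mem_eq_inf' ht' σ
    rwa [(σ.argminOn_eq_iff hs (ht ha)).2 fun y hy => hta ▸ h ▸ inf'_le σ hy]
  · exact (inf'_le σ h).trans_eq (σ.apply_argminOn hs)

theorem inf'_eq_inf'_iff_argminOn_union_mem_inter [DecidableEq U] {A B : Finset U}
    (hA : A.Nonempty) (hB : B.Nonempty) (hAB : (A ∪ B).Nonempty) :
    A.inf' hA σ = B.inf' hB σ ↔ σ.argminOn hAB ∈ A ∩ B := by
  rw [mem_inter, ← inf'_eq_inf'_iff_argminOn_mem σ hAB subset_union_left hA,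
    ← inf'_eq_inf'_iff_argminOn_mem σ hAB subset_union_right hB, inf'_union hA hB]
  constructor
  · intro h; simp [h]
  · rintro ⟨h₁, h₂⟩; exact h₁.trans h₂.symm

theorem argminOn_mul_of_mapsTo {τ : Perm U} (hτ : ∀ z ∈ s, τ z ∈ s)
    (hτ' : ∀ z ∈ s, τ⁻¹ z ∈ s) : (σ * τ).argminOn hs = τ⁻¹ (σ.argminOn hs) := by
  rw [argminOn_eq_iff _ _ (hτ' _ (σ.argminOn_mem hs))]
  intro y hy
  simp only [mul_apply, coe_inv, apply_symm_apply, apply_argminOn]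
  exact inf'_le σ (hτ y hy)

theorem argminOn_mul_swap [DecidableEq U] (hx : x ∈ s) (hy : y ∈ s) :
    (σ * swap x y).argminOn hs = swap x y (σ.argminOn hs) := by
  have h : ∀ z ∈ s, swap x y z ∈ s := fun z hz => by
    rcases eq_or_ne z x with rfl | hzx
    · simpa
    rcases eq_or_ne z y with rfl | hzy
    · simpa
    rwa [swap_apply_of_ne_of_ne hzx hzy]
  exact σ.argminOn_mul_of_mapsTo hs h (by simpa using h)

variable [Fintype U] [DecidableEq U]

theorem card_argminOn_eq_eq (hx : x ∈ s) (hy : y ∈ s) :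
    #{σ : Perm U | σ.argminOn hs = x} = #{σ : Perm U | σ.argminOn hs = y} := by
  refine card_nbij' (· * swap x y) (· * swap x y) ?_ ?_ ?_ ?_
  · intro σ hσ
    simp_all [argminOn_mul_swap _ hs hx hy]
  · intro σ hσ
    simp_all [argminOn_mul_swap _ hs hx hy]
  all_goals intro σ _; simp [mul_swap_mul_self]

theorem card_argminOn_mem (ht : t ⊆ s) (hx : x ∈ s) :
    #{σ : Perm U | σ.argminOn hs ∈ t} = #t * #{σ : Perm U | σ.argminOn hs = x} := by
  rw [← sum_card_fiberwise_eq_card_filter, ← smul_eq_mul, ← sum_const]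
  exact sum_congr rfl fun y hy => card_argminOn_eq_eq hs (ht hy) hx

end Equiv.Perm

open Equiv Perm

theorem minhash_collision_probability_general (U : Type*) [Fintype U] [LinearOrder U]
    (A B : Finset U) (hA : A.Nonempty) (hB : B.Nonempty) :
    (PMF.uniformOfFintype (Equiv.Perm U)).toOuterMeasure
        {σ : Equiv.Perm U | A.inf' hA ⇑σ = B.inf' hB ⇑σ} =
      ((A ∩ B).card : ENNReal) / ((A ∪ B).card : ENNReal) := by
  classical
  have hAB : (A ∪ B).Nonempty := hA.mono subset_union_left
  have ⟨x, hx⟩ := hAB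
  set c := #{σ : Perm U | σ.argminOn hAB = x}
  have hevent : #{σ : Perm U | A.inf' hA σ = B.inf' hB σ} = #(A ∩ B) * c := by
    simp only [inf'_eq_inf'_iff_argminOn_union_mem_inter _ hA hB hAB]
    exact card_argminOn_mem hAB inter_subset_union hx
  have htotal : Fintype.card (Perm U) = #(A ∪ B) * c := by
    rw [← card_argminOn_mem hAB subset_rfl hx, filter_true_of_mem fun σ _ => σ.argminOn_mem hAB,
      card_univ]
  have hc : (c : ENNReal) ≠ 0 := by
    have := Fintype.card_ne_zero (α := Perm U)
    rw [htotal] at this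
    exact_mod_cast right_ne_zero_of_mul this
  rw [PMF.toOuterMeasure_uniformOfFintype_apply, Fintype.card_subtype]
  simp only [Set.mem_ofPred_eq]
  rw [hevent, htotal]
  push_cast
  exact ENNReal.mul_div_mul_right _ _ hc (ENNReal.natCast_ne_top c)

/-- The MinHash theorem: for nonempty finite sets `A, B` in a nonempty finite
linearly ordered universe `U`, the probability that a uniformly random
permutation `σ` of `U` satisfies `min_{a ∈ A} σ a = min_{b ∈ B} σ b` is the
Jaccard coefficient `|A ∩ B| / |A ∪ B|`. -/
theorem minhash_collision_probability (U : Type*) [Fintype U] [Nonempty U] [LinearOrder U]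
    (A B : Finset U) (hA : A.Nonempty) (hB : B.Nonempty) :
    (PMF.uniformOfFintype (Equiv.Perm U)).toOuterMeasure
        {σ : Equiv.Perm U | A.inf' hA ⇑σ = B.inf' hB ⇑σ} =
      ((A ∩ B).card : ENNReal) / ((A ∪ B).card : ENNReal) :=
  minhash_collision_probability_general U A B hA hB
end

section
/- Let U be a nonempty finite linearly ordered type, let A and B be nonempty finite subsets of U, and let σ₁, …, σ_k be independent, uniformly random permutations of U. Then the expected number of indices i ∈ {1, …, k} for which min over a ∈ A of σ_i(a) equals min over b ∈ B of σ_i(b) is exactly k · |A ∩ B| / |A ∪ B|. -/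
/-!
For a fixed permutation `σ`, the minima of `σ` over `A` and over `B` agree exactly when the
element of `A ∪ B` with the smallest `σ`-value lies in `A ∩ B`. Precomposing `σ` with the
transposition of two elements of `A ∪ B` moves this minimizer from one to the other, so under a
uniformly random `σ` it is uniformly distributed on `A ∪ B`, and the minima agree with probability
`|A ∩ B| / |A ∪ B|`. Each coordinate of a uniformly random `k`-tuple of permutations is a uniformly
random permutation, so linearity of expectation gives the factor `k`.
-/

open Finset
open scoped ENNReal

namespace Equiv

variable {α β : Type*} [LinearOrder β]

def argminOn (σ : α ≃ β) (S : Finset α) (hS : S.Nonempty) : α :=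
  σ.symm (S.inf' hS σ)

theorem apply_argminOn (σ : α ≃ β) {S : Finset α} (hS : S.Nonempty) :
    σ (σ.argminOn S hS) = S.inf' hS σ :=
  σ.apply_symm_apply _

theorem argminOn_mem (σ : α ≃ β) {S : Finset α} (hS : S.Nonempty) : σ.argminOn S hS ∈ S := by
  obtain ⟨a, ha, h⟩ := exists_mem_eq_inf' hS σ
  rwa [argminOn, h, symm_apply_apply]

theorem inf'_eq_inf'_iff_argminOn_mem (σ : α ≃ β) {S T : Finset α} (hS : S.Nonempty)
    (hT : T.Nonempty) (hTS : T ⊆ S) :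
    T.inf' hT σ = S.inf' hS σ ↔ σ.argminOn S hS ∈ T := by
  constructor
  · intro h
    obtain ⟨t, ht, hmin⟩ := exists_mem_eq_inf' hT σ
    rwa [σ.injective ((σ.apply_argminOn hS).trans (h.symm.trans hmin))]
  · intro h
    exact le_antisymm ((inf'_le σ h).trans_eq (σ.apply_argminOn hS)) (inf'_mono σ hTS hT)

theorem inf'_eq_inf'_iff_argminOn_union_mem_inter [DecidableEq α] (σ : α ≃ β) {A B : Finset α}
    (hA : A.Nonempty) (hB : B.Nonempty) :
    A.inf' hA σ = B.inf' hB σ ↔ σ.argminOn (A ∪ B) (hA.mono subset_union_left) ∈ A ∩ B := by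
  rw [mem_inter, ← σ.inf'_eq_inf'_iff_argminOn_mem _ hA subset_union_left,
    ← σ.inf'_eq_inf'_iff_argminOn_mem _ hB subset_union_right, inf'_union hA hB]
  constructor
  · intro h
    simp [h]
  · rintro ⟨hA', hB'⟩
    exact hA'.trans hB'.symm

theorem argminOn_swap_trans [DecidableEq α] (σ : α ≃ β) {S : Finset α} (hS : S.Nonempty)
    {x y : α} (hx : x ∈ S) (hy : y ∈ S) :
    ((swap x y).trans σ).argminOn S hS = swap x y (σ.argminOn S hS) := by
  have hmap : S.map (swap x y).toEmbedding = S := by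
    refine map_perm fun a ha => ?_
    by_contra h
    exact ha (swap_apply_of_ne_of_ne (fun hax => h (hax ▸ hx)) fun hay => h (hay ▸ hy))
  have hinf : S.inf' hS ((swap x y).trans σ) = S.inf' hS σ :=
    calc S.inf' hS ((swap x y).trans σ) = (S.map (swap x y).toEmbedding).inf' hS.map σ :=
          (inf'_map (f := (swap x y).toEmbedding) σ hS.map).symm
      _ = S.inf' hS σ := inf'_congr _ hmap fun _ _ => rfl
  simp only [argminOn, hinf]
  rfl

variable [Fintype α] [Fintype β] [DecidableEq α]

theorem card_argminOn_eq_eq_card_argminOn_eq {S : Finset α} (hS : S.Nonempty) {x y : α}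
    (hx : x ∈ S) (hy : y ∈ S) :
    #{σ : α ≃ β | σ.argminOn S hS = x} = #{σ : α ≃ β | σ.argminOn S hS = y} := by
  have hinv : ∀ σ : α ≃ β, (swap x y).trans ((swap x y).trans σ) = σ := fun σ => by
    ext; simp
  refine card_nbij' ((swap x y).trans ·) ((swap x y).trans ·) ?_ ?_
    (fun σ _ => hinv σ) (fun σ _ => hinv σ)
  · intro σ hσ
    simp_all [argminOn_swap_trans σ hS hx hy]
  · intro σ hσ
    simp_all [argminOn_swap_trans σ hS hx hy]

theorem card_argminOn_mem_mul_card {S T : Finset α} (hS : S.Nonempty) (hTS : T ⊆ S) :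
    #{σ : α ≃ β | σ.argminOn S hS ∈ T} * #S = #T * Fintype.card (α ≃ β) := by
  obtain ⟨x₀, hx₀⟩ := id hS
  have hcount : ∀ R ⊆ S, #{σ : α ≃ β | σ.argminOn S hS ∈ R} =
      #R * #{σ : α ≃ β | σ.argminOn S hS = x₀} := fun R hRS => by
    rw [card_eq_sum_card_fiberwise (s := {σ : α ≃ β | σ.argminOn S hS ∈ R})
      (f := (·.argminOn S hS)) fun σ hσ => (mem_filter.1 hσ).2, ← smul_eq_mul, ← sum_const]
    refine sum_congr rfl fun x hx => ?_
    rw [filter_filter, ← card_argminOn_eq_eq_card_argminOn_eq hS (hRS hx) hx₀]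
    congr 1
    exact filter_congr fun σ _ => ⟨And.right, fun h => ⟨h ▸ hx, h⟩⟩
  have huniv : #{σ : α ≃ β | σ.argminOn S hS ∈ S} = Fintype.card (α ≃ β) := by
    rw [filter_true_of_mem fun σ _ => σ.argminOn_mem hS, card_univ]
  rw [← huniv, hcount T hTS, hcount S subset_rfl]
  ring

theorem card_inf'_eq_inf'_mul_card_union {A B : Finset α} (hA : A.Nonempty) (hB : B.Nonempty) :
    #{σ : α ≃ β | A.inf' hA σ = B.inf' hB σ} * #(A ∪ B) = #(A ∩ B) * Fintype.card (α ≃ β) := by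
  simp_rw [inf'_eq_inf'_iff_argminOn_union_mem_inter]
  exact card_argminOn_mem_mul_card _ inter_subset_union

end Equiv

namespace PMF

variable {ι X : Type*} [Fintype X] [Nonempty X]

theorem tsum_uniformOfFintype_mul_ite (p : X → Prop) [DecidablePred p] :
    ∑' x, uniformOfFintype X x * (if p x then 1 else 0) = #{x | p x} / Fintype.card X := by
  simp only [tsum_fintype, uniformOfFintype_apply]
  rw [← mul_sum, natCast_card_filter, ENNReal.div_eq_inv_mul]

theorem tsum_uniformOfFintype_pi_mul_apply [Fintype ι] [DecidableEq ι] (f : X → ℝ≥0∞) (i : ι) :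
    ∑' σ : ι → X, uniformOfFintype (ι → X) σ * f (σ i) =
      ∑' x, uniformOfFintype X x * f x := by
  simp only [tsum_fintype, uniformOfFintype_apply]
  rw [← mul_sum, ← mul_sum, ← Fintype.piFinset_univ, Fintype.sum_piFinset_apply, card_univ,
    Fintype.card_fun, nsmul_eq_mul, ← mul_assoc]
  congr 1
  have hX : (Fintype.card X : ℝ≥0∞) ^ (Fintype.card ι - 1) ≠ 0 := by simp
  have hX' : (Fintype.card X : ℝ≥0∞) ^ (Fintype.card ι - 1) ≠ ⊤ := by simp
  rw [← mul_pow_sub_one (Fintype.card_pos_iff.2 ⟨i⟩).ne', Nat.cast_mul, Nat.cast_pow,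
    ENNReal.mul_inv (.inr hX') (.inr hX), mul_assoc, ENNReal.inv_mul_cancel hX hX', mul_one]

theorem tsum_uniformOfFintype_pi_mul_card_filter [Fintype ι] [DecidableEq ι] (p : X → Prop)
    [DecidablePred p] :
    ∑' σ : ι → X, uniformOfFintype (ι → X) σ * (#{i | p (σ i)} : ℝ≥0∞) =
      Fintype.card ι * #{x | p x} / Fintype.card X := by
  calc ∑' σ : ι → X, uniformOfFintype (ι → X) σ * (#{i | p (σ i)} : ℝ≥0∞)
      = ∑ i : ι, ∑' σ : ι → X, uniformOfFintype (ι → X) σ * (if p (σ i) then 1 else 0) := by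
        simp only [tsum_fintype, natCast_card_filter, mul_sum]
        exact sum_comm
    _ = ∑ _i : ι, (#{x | p x} / Fintype.card X : ℝ≥0∞) := by
        simp only [tsum_uniformOfFintype_pi_mul_apply (fun x => if p x then 1 else 0),
          tsum_uniformOfFintype_mul_ite]
    _ = Fintype.card ι * #{x | p x} / Fintype.card X := by
        rw [sum_const, card_univ, nsmul_eq_mul, mul_div_assoc]

end PMF

/-- Unbiasedness of the MinHash signature count: for nonempty finite sets
`A, B` in a nonempty finite linearly ordered universe `U`, if
`σ₁, …, σ_k` are independent uniformly random permutations of `U` (modeled as a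
uniformly random tuple in `Fin k → Equiv.Perm U`), then the expected number of
indices `i` with `min_{a ∈ A} σᵢ a = min_{b ∈ B} σᵢ b` equals
`k · |A ∩ B| / |A ∪ B|`. -/
theorem minhash_expected_agreements (U : Type*) [Fintype U] [Nonempty U] [LinearOrder U]
    (A B : Finset U) (hA : A.Nonempty) (hB : B.Nonempty) (k : ℕ) :
    (∑' σ : Fin k → Equiv.Perm U,
        PMF.uniformOfFintype (Fin k → Equiv.Perm U) σ *
          ((Finset.univ.filter fun i : Fin k =>
              A.inf' hA ⇑(σ i) = B.inf' hB ⇑(σ i)).card : ENNReal)) =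
      (k : ENNReal) * ((A ∩ B).card : ENNReal) / ((A ∪ B).card : ENNReal) := by
  have hratio : (#{σ : Equiv.Perm U | A.inf' hA σ = B.inf' hB σ} /
      Fintype.card (Equiv.Perm U) : ℝ≥0∞) = #(A ∩ B) / #(A ∪ B) := by
    rw [ENNReal.div_eq_div_iff (by simp [hA.ne_empty])
      (ENNReal.natCast_ne_top _) (by simp) (ENNReal.natCast_ne_top _)]
    exact_mod_cast (mul_comm _ _).trans
      ((Equiv.card_inf'_eq_inf'_mul_card_union hA hB).trans (mul_comm _ _))
  refine (PMF.tsum_uniformOfFintype_pi_mul_card_filter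
    (fun σ : Equiv.Perm U => A.inf' hA σ = B.inf' hB σ)).trans ?_
  rw [Fintype.card_fin, mul_div_assoc, hratio, ← mul_div_assoc]
end
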